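/- If m ≥ 2 and n ≥ 2 are integers with n ≡ 0 (mod 3), then the bondage number of K_m ⊠ P_n satisfies b(K_m ⊠ P_n) ≤ ⌈m/2⌉. -/

import Mathlib

open SimpleGraph Finset

/-- `D` is a dominating set of `G`: every vertex is in `D` or adjacent to a vertex of `D`. -/
def SimpleGraph.IsDominatingSet {V : Type*} (G : SimpleGraph V) (D : Set V) : Prop :=
  ∀ v : V, v ∈ D ∨ ∃ u ∈ D, G.Adj u v

/-- The domination number of a finite graph. -/
noncomputable def SimpleGraph.dominationNumber {V : Type*} [Fintype V]
    (G : SimpleGraph V) : ℕ :=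
  sInf {k | ∃ D : Finset V, D.card = k ∧ G.IsDominatingSet ↑D}

/-- The bondage number of a finite graph: the least size of a set of edges whose removal
increases the domination number. -/
noncomputable def SimpleGraph.bondageNumber {V : Type*} [Fintype V]
    (G : SimpleGraph V) : ℕ :=
  sInf {k | ∃ Z : Finset (Sym2 V), Z.card = k ∧ (↑Z : Set (Sym2 V)) ⊆ G.edgeSet ∧
    G.dominationNumber < (G.deleteEdges ↑Z).dominationNumber}

/-- The strong product of two simple graphs. -/
def SimpleGraph.strongProd {V W : Type*} (G : SimpleGraph V) (H : SimpleGraph W) :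
    SimpleGraph (V × W) :=
  SimpleGraph.fromRel (fun a b =>
    (a.1 = b.1 ∧ H.Adj a.2 b.2) ∨ (G.Adj a.1 b.1 ∧ a.2 = b.2) ∨
      (G.Adj a.1 b.1 ∧ H.Adj a.2 b.2))

infixl:70 " ⊠ " => SimpleGraph.strongProd

/-!
Write the vertices of `K_m ⊠ P_{3k}` as (row, column). One vertex in each of the columns
`1, 4, …, 3k-2` dominates, so `γ ≤ k`. A vertex dominates at most three columns, so a dominating
set of size `k` has exactly one vertex `d` in columns `0, 1, 2`; it lies in column `1` and alone
dominates columns `0` and `1`. Removing the copy in column `1` of an edge cover of `K_m`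
(`⌈m/2⌉` edges) separates `d` from one of the vertices it must dominate, so `γ` becomes `k + 1`.
-/

section Segment

variable {α : Type*}

/-- `D` dominates the vertices `a, …, b - 1` of the path on `ℕ` once each `u ∈ D` is placed at
`f u`. -/
def DominatesSegment (f : α → ℕ) (D : Finset α) (a b : ℕ) : Prop :=
  ∀ c ∈ Ico a b, ∃ u ∈ D, f u ≤ c + 1 ∧ c ≤ f u + 1

variable {f : α → ℕ} {D : Finset α} {a b : ℕ}

theorem DominatesSegment.sub_le_three_mul_card (h : DominatesSegment f D a b) :
    b - a ≤ 3 * #D := by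
  classical
  have hsub : Ico a b ⊆ D.biUnion fun u => Icc (f u - 1) (f u + 1) := by
    intro c hc
    obtain ⟨u, hu, h₁, h₂⟩ := h c hc
    exact mem_biUnion.mpr ⟨u, hu, mem_Icc.mpr ⟨by omega, by omega⟩⟩
  calc b - a = #(Ico a b) := (Nat.card_Ico a b).symm
    _ ≤ ∑ u ∈ D, #(Icc (f u - 1) (f u + 1)) := (card_le_card hsub).trans card_biUnion_le
    _ ≤ #D • 3 := sum_le_card_nsmul _ _ _ fun u _ => by rw [Nat.card_Icc]; omega
    _ = 3 * #D := by rw [smul_eq_mul, mul_comm]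

theorem DominatesSegment.filter (h : DominatesSegment f D a b) (p : α → Prop) [DecidablePred p]
    (hp : ∀ u ∈ D, ∀ c ∈ Ico a b, f u ≤ c + 1 → c ≤ f u + 1 → p u) :
    DominatesSegment f (D.filter p) a b := fun c hc => by
  obtain ⟨u, hu, h₁, h₂⟩ := h c hc
  exact ⟨u, mem_filter.mpr ⟨hu, hp u hu c hc h₁ h₂⟩, h₁, h₂⟩

theorem DominatesSegment.mono {a' b' : ℕ} (h : DominatesSegment f D a b) (ha : a ≤ a')
    (hb : b' ≤ b) : DominatesSegment f D a' b' :=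
  fun c hc => h c (Ico_subset_Ico ha hb hc)

theorem DominatesSegment.exists_unique_mem_first_block {k : ℕ}
    (hk : 0 < k) (h : DominatesSegment f D 0 (3 * k)) (hD : #D ≤ k) :
    ∃ d ∈ D, f d = 1 ∧ ∀ u ∈ D, f u ≤ 2 → u = d := by
  classical
  have hsplit := card_filter_add_card_filter_not (s := D) fun u => f u ≤ 2
  -- the positions `4, …, 3k - 1` need `k - 1` points outside the first block
  have hfar : DominatesSegment f (D.filter fun u => ¬f u ≤ 2) 4 (3 * k) :=
    (h.mono (Nat.zero_le _) le_rfl).filter _ fun u _ c hc _ hcu => by rw [mem_Ico] at hc; omega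
  have hnear : #(D.filter fun u => f u ≤ 2) ≤ 1 := by
    have := hfar.sub_le_three_mul_card
    omega
  obtain ⟨d, hdD, hd₁, -⟩ := h 1 (mem_Ico.mpr ⟨by omega, by omega⟩)
  have huniq : ∀ u ∈ D, f u ≤ 2 → u = d := fun u hu hu2 =>
    card_le_one.mp hnear u (mem_filter.mpr ⟨hu, hu2⟩) d (mem_filter.mpr ⟨hdD, hd₁⟩)
  obtain ⟨d₀, hd₀D, hd₀, -⟩ := h 0 (mem_Ico.mpr ⟨le_rfl, by omega⟩)
  obtain rfl := huniq d₀ hd₀D (by omega)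
  refine ⟨d₀, hd₀D, ?_, huniq⟩
  by_contra hne
  -- otherwise `f d₀ = 0`, and the positions `2, …, 3k - 1` need `k` points outside the first block
  have hrest : DominatesSegment f (D.filter fun u => ¬f u ≤ 2) 2 (3 * k) :=
    (h.mono (Nat.zero_le _) le_rfl).filter _ fun u hu c hc _ hcu hu2 => by
      obtain rfl := huniq u hu hu2
      rw [mem_Ico] at hc; omega
  have := hrest.sub_le_three_mul_card
  have : 0 < #(D.filter fun u => f u ≤ 2) := card_pos.mpr ⟨d₀, mem_filter.mpr ⟨hd₀D, by omega⟩⟩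
  omega

end Segment

namespace SimpleGraph

variable {V W : Type*}

def IsEdgeCover (G : SimpleGraph V) (P : Set (Sym2 V)) : Prop :=
  P ⊆ G.edgeSet ∧ ∀ v, ∃ e ∈ P, v ∈ e

theorem strongProd_adj {G : SimpleGraph V} {H : SimpleGraph W} {a b : V × W} :
    (G ⊠ H).Adj a b ↔ a ≠ b ∧ (a.1 = b.1 ∨ G.Adj a.1 b.1) ∧ (a.2 = b.2 ∨ H.Adj a.2 b.2) := by
  simp only [strongProd, fromRel_adj]
  constructor
  · rintro ⟨hne, h⟩
    refine ⟨hne, ?_⟩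
    rcases h with (h | h | h) | (h | h | h) <;> simp_all [G.adj_comm, H.adj_comm]
  · rintro ⟨hne, h1 | h1, h2 | h2⟩
    · exact absurd (Prod.ext h1 h2) hne
    all_goals tauto

theorem pathGraph_eq_or_adj_iff {n : ℕ} {u v : Fin n} :
    (u = v ∨ (pathGraph n).Adj u v) ↔ u.val ≤ v.val + 1 ∧ v.val ≤ u.val + 1 := by
  rw [pathGraph_adj, Fin.ext_iff]
  omega

theorem strongProd_pathGraph_adj_le {H : SimpleGraph V} {n : ℕ} {a b : V × Fin n}
    (h : (H ⊠ pathGraph n).Adj a b) : a.2.val ≤ b.2.val + 1 ∧ b.2.val ≤ a.2.val + 1 :=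
  pathGraph_eq_or_adj_iff.mp (strongProd_adj.mp h).2.2

theorem top_strongProd_pathGraph_adj {n : ℕ} {a b : V × Fin n} :
    ((⊤ : SimpleGraph V) ⊠ pathGraph n).Adj a b ↔
      a ≠ b ∧ a.2.val ≤ b.2.val + 1 ∧ b.2.val ≤ a.2.val + 1 := by
  rw [strongProd_adj, ← pathGraph_eq_or_adj_iff, top_adj]
  tauto

theorem IsDominatingSet.mono {G G' : SimpleGraph V} {D : Set V} (hle : G ≤ G')
    (h : G.IsDominatingSet D) : G'.IsDominatingSet D := fun v =>
  (h v).imp_right fun ⟨u, hu, huv⟩ => ⟨u, hu, hle huv⟩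

section Finite

variable [Fintype V] {G : SimpleGraph V}

theorem dominationNumber_le_card {D : Finset V} (h : G.IsDominatingSet ↑D) :
    G.dominationNumber ≤ #D :=
  Nat.sInf_le ⟨D, rfl, h⟩

theorem le_dominationNumber {k : ℕ} (h : ∀ D : Finset V, G.IsDominatingSet ↑D → k ≤ #D) :
    k ≤ G.dominationNumber :=
  le_csInf ⟨_, univ, rfl, fun v => Or.inl (by simp)⟩ (by rintro _ ⟨D, rfl, hD⟩; exact h D hD)

theorem bondageNumber_le_card {Z : Finset (Sym2 V)} (hZ : ↑Z ⊆ G.edgeSet)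
    (h : G.dominationNumber < (G.deleteEdges ↑Z).dominationNumber) : G.bondageNumber ≤ #Z :=
  Nat.sInf_le ⟨Z, rfl, hZ, h⟩

end Finite

theorem IsDominatingSet.dominatesSegment {H : SimpleGraph V} [Nonempty V] {n : ℕ}
    {D : Finset (V × Fin n)} (h : (H ⊠ pathGraph n).IsDominatingSet ↑D) :
    DominatesSegment (fun u => u.2.val) D 0 n := by
  intro c hc
  obtain ⟨r⟩ := ‹Nonempty V›
  have hcn : c < n := (mem_Ico.mp hc).2
  rcases h (r, ⟨c, hcn⟩) with hD | ⟨u, hu, hadj⟩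
  · exact ⟨_, hD, by simp⟩
  · exact ⟨u, hu, strongProd_pathGraph_adj_le hadj⟩

theorem dominationNumber_top_strongProd_pathGraph_le [Fintype V] [DecidableEq V] [Nonempty V]
    (k : ℕ) : ((⊤ : SimpleGraph V) ⊠ pathGraph (3 * k)).dominationNumber ≤ k := by
  obtain ⟨r⟩ := ‹Nonempty V›
  let center : Fin k → V × Fin (3 * k) := fun j => (r, ⟨3 * j + 1, by omega⟩)
  refine (dominationNumber_le_card (D := univ.image center) fun v => ?_).trans
    (card_image_le.trans (card_fin k).le)
  have hc := v.2.isLt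
  have hu : center ⟨v.2 / 3, by omega⟩ ∈ univ.image center := mem_image_of_mem _ (mem_univ _)
  by_cases hv : center ⟨v.2 / 3, by omega⟩ = v
  · exact Or.inl (hv ▸ hu)
  · exact Or.inr ⟨_, hu, top_strongProd_pathGraph_adj.mpr ⟨hv, by dsimp only [center]; omega⟩⟩

theorem le_dominationNumber_deleteEdges [Fintype V] [Nonempty V] {H : SimpleGraph V} {k : ℕ}
    (hk : 0 < k) {Z : Set (Sym2 (V × Fin (3 * k)))}
    (hZ : ∀ v : V × Fin (3 * k), v.2.val = 1 → ∃ w, w ≠ v ∧ w.2.val ≤ 1 ∧ s(v, w) ∈ Z) :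
    k + 1 ≤ ((H ⊠ pathGraph (3 * k)).deleteEdges Z).dominationNumber := by
  refine le_dominationNumber fun D hD => ?_
  by_contra! hcard
  obtain ⟨d, hdD, hd₁, huniq⟩ :=
    (hD.mono (deleteEdges_le _)).dominatesSegment.exists_unique_mem_first_block hk (by omega)
  obtain ⟨w, hwd, hw, hdw⟩ := hZ d hd₁
  rcases hD w with hwD | ⟨u, huD, hadj⟩
  · exact hwd (huniq w hwD (by omega))
  · obtain ⟨hadj, hnot⟩ := deleteEdges_adj.mp hadj
    obtain rfl := huniq u huD (by have := strongProd_pathGraph_adj_le hadj; omega)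
    exact hnot hdw

theorem exists_isEdgeCover_top_fin {m : ℕ} (hm : 2 ≤ m) :
    ∃ P : Finset (Sym2 (Fin m)), (⊤ : SimpleGraph (Fin m)).IsEdgeCover ↑P ∧ #P ≤ (m + 1) / 2 := by
  -- pair `2j` with `2j + 1`; for odd `m` the last pair is `{m - 2, m - 1}`
  let pair : Fin ((m + 1) / 2) → Sym2 (Fin m) := fun j =>
    s(⟨min (2 * j.val) (m - 2), by omega⟩, ⟨min (2 * j.val) (m - 2) + 1, by omega⟩)
  refine ⟨univ.image pair, ⟨?_, fun a => ?_⟩, card_image_le.trans (card_fin _).le⟩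
  · rintro _ he
    obtain ⟨j, -, rfl⟩ := mem_image.mp he
    simp [pair, Fin.ext_iff]
  · refine ⟨pair ⟨a / 2, by omega⟩, by simp, ?_⟩
    simp only [pair, Sym2.mem_iff, Fin.ext_iff]
    omega

theorem bondageNumber_top_strongProd_pathGraph_le [Fintype V] [DecidableEq V] [Nonempty V]
    {k : ℕ} (hk : 0 < k) {P : Finset (Sym2 V)} (hP : (⊤ : SimpleGraph V).IsEdgeCover ↑P) :
    ((⊤ : SimpleGraph V) ⊠ pathGraph (3 * k)).bondageNumber ≤ #P := by
  let lift : V → V × Fin (3 * k) := fun a => (a, ⟨1, by omega⟩)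
  refine (bondageNumber_le_card (Z := P.image (Sym2.map lift)) ?_ ?_).trans card_image_le
  · rintro _ he
    obtain ⟨e, heP, rfl⟩ := mem_image.mp he
    induction e using Sym2.ind with
    | h a b =>
      have hab : a ≠ b := (hP.1 heP : (⊤ : SimpleGraph V).Adj a b)
      simp [lift, top_strongProd_pathGraph_adj, hab]
  · refine (dominationNumber_top_strongProd_pathGraph_le k).trans_lt
      (le_dominationNumber_deleteEdges hk fun v hv₁ => ?_)
    obtain ⟨e, heP, hve⟩ := hP.2 v.1
    obtain ⟨b, rfl⟩ := Sym2.mem_iff_exists.mp hve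
    have hvb : v.1 ≠ b := (hP.1 heP : (⊤ : SimpleGraph V).Adj v.1 b)
    have hv : v = lift v.1 := Prod.ext rfl (Fin.ext hv₁)
    refine ⟨lift b, fun h => hvb (congrArg Prod.fst h).symm, le_rfl, ?_⟩
    rw [hv]
    exact mem_image.mpr ⟨_, heP, Sym2.map_mk _ _ _⟩

end SimpleGraph

/-- **Lemma.** If `m ≥ 2` and `n ≡ 0 (mod 3)` (`n ≥ 2`), then
`b(K_m ⊠ P_n) ≤ ⌈m/2⌉`. -/
theorem bondage_le_of_mod_three_eq_zero (m n : ℕ) (hm : 2 ≤ m) (hn : 2 ≤ n)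
    (h3 : n % 3 = 0) :
    ((⊤ : SimpleGraph (Fin m)) ⊠ pathGraph n).bondageNumber ≤ (m + 1) / 2 := by
  obtain ⟨k, rfl⟩ : ∃ k, n = 3 * k := ⟨n / 3, by omega⟩
  have : Nonempty (Fin m) := ⟨⟨0, by omega⟩⟩
  obtain ⟨P, hP, hcard⟩ := exists_isEdgeCover_top_fin hm
  exact (bondageNumber_top_strongProd_pathGraph_le (by omega) hP).trans hcard
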